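/- arXiv:2605.30220 — 3 statements merged into one kernel-verified Lean document; each statement's English description precedes it below -/
import Mathlib

section
/- Let Z ⊂ ℝ^d be a circuit with Radon partition (Z⁺, Z⁻), and let x be the Radon point of Z (the point in conv(Z⁺) ∩ conv(Z⁻) given by the affine dependence). Then for any p ∈ Z⁺ and q ∈ Z⁻, x does not lie in conv(Z \ {p, q}). -/
open Finset

open scoped Classical

variable {d : ℕ}

/-- An affine dependence on the finite point set `Z` with coefficients `l`:
the coefficients sum to zero, the weighted points sum to zero, and not all
coefficients vanish on `Z`. -/
def AffDepOn (Z : Finset (Fin d → ℝ)) (l : (Fin d → ℝ) → ℝ) : Prop :=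
  (∑ p ∈ Z, l p • p) = 0 ∧ (∑ p ∈ Z, l p) = 0 ∧ ∃ p ∈ Z, l p ≠ 0

/-- `Z` is affinely dependent. -/
def AffDep (Z : Finset (Fin d → ℝ)) : Prop := ∃ l, AffDepOn Z l

/-- A circuit: a minimal affinely dependent finite set. -/
def IsCircuit (Z : Finset (Fin d → ℝ)) : Prop :=
  AffDep Z ∧ ∀ Y : Finset (Fin d → ℝ), Y ⊂ Z → ¬ AffDep Y

/-- Positive part of the Radon partition induced by coefficients `l`. -/
noncomputable def posPart (Z : Finset (Fin d → ℝ)) (l : (Fin d → ℝ) → ℝ) : Finset (Fin d → ℝ) :=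
  Z.filter fun p => 0 < l p

/-- Negative part of the Radon partition induced by coefficients `l`. -/
noncomputable def negPart (Z : Finset (Fin d → ℝ)) (l : (Fin d → ℝ) → ℝ) : Finset (Fin d → ℝ) :=
  Z.filter fun p => l p < 0

/-- The Radon point `x = ∑_{p ∈ Z⁺} (λ_p / Λ) p`, where `Λ = ∑_{p ∈ Z⁺} λ_p`. -/
noncomputable def radonPoint (Z : Finset (Fin d → ℝ)) (l : (Fin d → ℝ) → ℝ) : Fin d → ℝ :=
  ∑ r ∈ posPart Z l, (l r / ∑ s ∈ posPart Z l, l s) • r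

/-!
If the Radon point `x` were a convex combination of `Z \ {p, q}`, subtracting it from the
representation `x = ∑_{r ∈ Z⁺} (λ_r / Λ) r` would give an affine dependence on `Z` whose
coefficient at `p` is `λ_p / Λ > 0` and whose coefficient at `q` is `0`. Dropping `q`, this is
an affine dependence on the proper subset `Z \ {q}`, contradicting the minimality of the circuit.
-/

theorem AffDepOn.erase {Z : Finset (Fin d → ℝ)} {l : (Fin d → ℝ) → ℝ} (h : AffDepOn Z l)
    {q : Fin d → ℝ} (hq : l q = 0) : AffDepOn (Z.erase q) l := by
  obtain ⟨hsmul, hsum, p, hpZ, hp⟩ := h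
  refine ⟨?_, ?_, p, mem_erase.2 ⟨fun hpq => hp (hpq ▸ hq), hpZ⟩, hp⟩
  · rwa [sum_erase _ (by rw [hq, zero_smul])]
  · rwa [sum_erase _ hq]

theorem IsCircuit.affDepOn_ne_zero {Z : Finset (Fin d → ℝ)} (hZ : IsCircuit Z)
    {l : (Fin d → ℝ) → ℝ} (hl : AffDepOn Z l) {q : Fin d → ℝ} (hq : q ∈ Z) : l q ≠ 0 :=
  fun hlq => hZ.2 _ (erase_ssubset hq) ⟨l, hl.erase hlq⟩

theorem affDepOn_sub_of_sum_eq {Z : Finset (Fin d → ℝ)} {w₁ w₂ : (Fin d → ℝ) → ℝ}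
    (hsmul : ∑ r ∈ Z, w₁ r • r = ∑ r ∈ Z, w₂ r • r) (hsum : ∑ r ∈ Z, w₁ r = ∑ r ∈ Z, w₂ r)
    {p : Fin d → ℝ} (hp : p ∈ Z) (hne : w₁ p ≠ w₂ p) : AffDepOn Z (w₁ - w₂) := by
  refine ⟨?_, ?_, p, hp, sub_ne_zero.2 hne⟩
  · simp only [Pi.sub_apply, sub_smul, sum_sub_distrib, hsmul, sub_self]
  · simp only [Pi.sub_apply, sum_sub_distrib, hsum, sub_self]

theorem sum_posPart_pos {Z : Finset (Fin d → ℝ)} {l : (Fin d → ℝ) → ℝ}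
    {p : Fin d → ℝ} (hp : p ∈ posPart Z l) : 0 < ∑ s ∈ posPart Z l, l s :=
  sum_pos (fun _ hr => (mem_filter.1 hr).2) ⟨p, hp⟩

theorem sum_posPart_div_sum_eq_one {Z : Finset (Fin d → ℝ)} {l : (Fin d → ℝ) → ℝ}
    {p : Fin d → ℝ} (hp : p ∈ posPart Z l) :
    ∑ r ∈ posPart Z l, l r / ∑ s ∈ posPart Z l, l s = 1 := by
  rw [← sum_div, div_self (sum_posPart_pos hp).ne']

theorem radon_point_not_in_hull_of_two_removed_general
    (Z : Finset (Fin d → ℝ)) (hZ : IsCircuit Z)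
    (l : (Fin d → ℝ) → ℝ)
    (p q : Fin d → ℝ) (hp : p ∈ posPart Z l) (hq : q ∈ negPart Z l) :
    radonPoint Z l ∉ convexHull ℝ (↑(Z \ {p, q}) : Set (Fin d → ℝ)) := by
  intro hx
  obtain ⟨w, -, hw1, hwx⟩ := Finset.mem_convexHull'.1 hx
  obtain ⟨hpZ, hlp⟩ := mem_filter.1 hp
  obtain ⟨hqZ, hlq⟩ := mem_filter.1 hq
  have hq_not_pos : q ∉ posPart Z l := fun h => (mem_filter.1 h).2.not_gt hlq
  have hposZ : posPart Z l ⊆ Z := filter_subset _ _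
  have hSZ : Z \ {p, q} ⊆ Z := sdiff_subset
  set ρ := Set.indicator ↑(posPart Z l) fun r => l r / ∑ s ∈ posPart Z l, l s
  set σ := Set.indicator ↑(Z \ {p, q}) w
  have hdep : AffDepOn Z (ρ - σ) := by
    refine affDepOn_sub_of_sum_eq ?_ ?_ hpZ ?_
    · rw [sum_indicator_subset_of_eq_zero _ (fun r c => c • r) hposZ (zero_smul ℝ),
        sum_indicator_subset_of_eq_zero _ (fun r c => c • r) hSZ (zero_smul ℝ), hwx, radonPoint]
    · rw [sum_indicator_subset _ hposZ, sum_indicator_subset _ hSZ, hw1,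
        sum_posPart_div_sum_eq_one hp]
    · simpa [ρ, σ, hp] using (div_pos hlp (sum_posPart_pos hp)).ne'
  exact hZ.affDepOn_ne_zero hdep hqZ (by simp [ρ, σ, hq_not_pos])

theorem radon_point_not_in_hull_of_two_removed
    (Z : Finset (Fin d → ℝ)) (hZ : IsCircuit Z)
    (l : (Fin d → ℝ) → ℝ) (hl : AffDepOn Z l) (hne : ∀ p ∈ Z, l p ≠ 0)
    (p q : Fin d → ℝ) (hp : p ∈ posPart Z l) (hq : q ∈ negPart Z l) :
    radonPoint Z l ∉ convexHull ℝ (↑(Z \ {p, q}) : Set (Fin d → ℝ)) :=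
  radon_point_not_in_hull_of_two_removed_general Z hZ l p q hp hq
end

section
/- Let V be a finite point set in ℝ^d and let Δ be a geometric triangulation of conv(V) using vertices from V, viewed as a set of (d+1)-element vertex subsets of V whose simplices are full-dimensional, have pairwise intersections that are common faces, and whose union is conv(V). Suppose a circuit Z ⊆ V has its positive local triangulation realized, i.e., every set Z\{p} with p ∈ Z⁺ is contained in some member of Δ. Then the negative local triangulation is not realized: there exists q ∈ Z⁻ such that Z\{q} is not contained in any member of Δ. -/
/-!
The Radon point of the circuit lies both in `conv Z⁻` and in `conv Z⁺`. If `Z \ {p} ⊆ S` and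
`Z \ {q} ⊆ T` for simplices `S, T` of the triangulation, with `p ∈ Z⁺` and `q ∈ Z⁻`, then
`Z⁻ ⊆ S` and `Z⁺ ⊆ T`. Gluing `S` and `T` along the common face `S ∩ T` and using that on a
simplex the convex hulls of two vertex sets meet in the hull of their intersection, the hulls of
`Z⁻` and `Z⁺` would have to meet in the hull of `Z⁻ ∩ Z⁺ = ∅`.
-/

open Finset

open scoped Classical

variable {d : ℕ}

section Simplices

variable {E : Type*} [AddCommGroup E] [Module ℝ E]

theorem disjoint_convexHull_of_subset_of_convexHull_inter [DecidableEq E] {S T A B : Finset E}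
    (hS : AffineIndependent ℝ ((↑) : S → E)) (hT : AffineIndependent ℝ ((↑) : T → E))
    (hST : convexHull ℝ (S : Set E) ∩ convexHull ℝ (T : Set E) = convexHull ℝ (↑(S ∩ T) : Set E))
    (hAS : A ⊆ S) (hBT : B ⊆ T) (hAB : Disjoint A B) :
    Disjoint (convexHull ℝ (A : Set E)) (convexHull ℝ (B : Set E)) := by
  refine Set.disjoint_left.2 fun x hxA hxB => ?_
  have hxST : x ∈ convexHull ℝ (↑(S ∩ T) : Set E) :=
    hST ▸ ⟨convexHull_mono (coe_subset.2 hAS) hxA, convexHull_mono (coe_subset.2 hBT) hxB⟩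
  have hxAT : x ∈ convexHull ℝ (↑(A ∩ T) : Set E) := by
    rw [← inter_eq_left.2 hAS, inter_assoc, coe_inter, hS.convexHull_inter hAS inter_subset_left]
    exact ⟨hxA, hxST⟩
  have hxABT : x ∈ convexHull ℝ (↑(A ∩ T ∩ B) : Set E) := by
    rw [coe_inter, hT.convexHull_inter inter_subset_right hBT]
    exact ⟨hxAT, hxB⟩
  rwa [inter_right_comm, disjoint_iff_inter_eq_empty.1 hAB, empty_inter, coe_empty,
    convexHull_empty] at hxABT

end Simplices

section Circuits

theorem affineIndependent_of_not_affDep {S : Finset (Fin d → ℝ)} (hS : ¬ AffDep S) :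
    AffineIndependent ℝ ((↑) : S → Fin d → ℝ) := by
  rw [affineIndependent_iff_of_fintype]
  intro w hw₀ hw₁ i
  rw [Finset.weightedVSub_eq_linear_combination _ hw₀] at hw₁
  by_contra hwi
  refine hS ⟨fun y => if h : y ∈ S then w ⟨y, h⟩ else 0, ?_, ?_, i, i.2, by simpa using hwi⟩
  · rw [← sum_attach, ← univ_eq_attach]
    simpa using hw₁
  · rw [← sum_attach, ← univ_eq_attach]
    simpa using hw₀

theorem sum_posPart_add_sum_negPart {M : Type*} [AddCommMonoid M] (Z : Finset (Fin d → ℝ))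
    (l : (Fin d → ℝ) → ℝ) (f : (Fin d → ℝ) → M) (hf : ∀ x ∈ Z, l x = 0 → f x = 0) :
    ∑ x ∈ posPart Z l, f x + ∑ x ∈ negPart Z l, f x = ∑ x ∈ Z, f x := by
  unfold _root_.posPart _root_.negPart
  rw [sum_filter, sum_filter, ← sum_add_distrib]
  refine sum_congr rfl fun x hx => ?_
  rcases lt_trichotomy (l x) 0 with h | h | h
  · simp [h, h.not_gt]
  · simp [h, hf x hx h]
  · simp [h, h.not_gt]

theorem disjoint_posPart_negPart (Z : Finset (Fin d → ℝ)) (l : (Fin d → ℝ) → ℝ) :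
    Disjoint (posPart Z l) (negPart Z l) :=
  disjoint_filter_filter' _ _ fun _ hpos hneg x hx => (hpos x hx).not_gt (hneg x hx)

theorem negPart_subset_erase {Z : Finset (Fin d → ℝ)} {l : (Fin d → ℝ) → ℝ} {p : Fin d → ℝ}
    (hp : p ∈ posPart Z l) : negPart Z l ⊆ Z.erase p := fun _ hr =>
  mem_erase.2 ⟨fun h => disjoint_left.1 (disjoint_posPart_negPart Z l) hp (h ▸ hr),
    (mem_filter.1 hr).1⟩

theorem posPart_subset_erase {Z : Finset (Fin d → ℝ)} {l : (Fin d → ℝ) → ℝ} {q : Fin d → ℝ}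
    (hq : q ∈ negPart Z l) : posPart Z l ⊆ Z.erase q := fun _ hr =>
  mem_erase.2 ⟨fun h => disjoint_left.1 (disjoint_posPart_negPart Z l) (h ▸ hr) hq,
    (mem_filter.1 hr).1⟩

theorem radonPoint_eq_centerMass_posPart (Z : Finset (Fin d → ℝ)) (l : (Fin d → ℝ) → ℝ) :
    radonPoint Z l = (posPart Z l).centerMass l id := by
  simp only [radonPoint, centerMass, smul_sum, smul_smul, div_eq_inv_mul, id]

namespace AffDepOn

variable {Z : Finset (Fin d → ℝ)} {l : (Fin d → ℝ) → ℝ}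

theorem sum_negPart (hl : AffDepOn Z l) : ∑ x ∈ negPart Z l, l x = -∑ x ∈ posPart Z l, l x :=
  eq_neg_of_add_eq_zero_right <|
    (sum_posPart_add_sum_negPart Z l l fun _ _ h => h).trans hl.2.1

theorem sum_smul_negPart (hl : AffDepOn Z l) :
    ∑ x ∈ negPart Z l, l x • x = -∑ x ∈ posPart Z l, l x • x :=
  eq_neg_of_add_eq_zero_right <|
    (sum_posPart_add_sum_negPart Z l (fun x => l x • x) fun _ _ h => by rw [h, zero_smul]).trans
      hl.1

theorem sum_posPart_pos (hl : AffDepOn Z l) : 0 < ∑ x ∈ posPart Z l, l x := by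
  obtain ⟨p, hpZ, hp⟩ := hl.2.2
  rcases hp.lt_or_gt with hneg | hpos
  · have hN : ∑ x ∈ negPart Z l, l x < 0 :=
      sum_neg (fun x hx => (mem_filter.1 hx).2) ⟨p, mem_filter.2 ⟨hpZ, hneg⟩⟩
    linarith [hl.sum_negPart]
  · exact sum_pos (fun x hx => (mem_filter.1 hx).2) ⟨p, mem_filter.2 ⟨hpZ, hpos⟩⟩

theorem posPart_nonempty (hl : AffDepOn Z l) : (posPart Z l).Nonempty :=
  nonempty_of_sum_ne_zero hl.sum_posPart_pos.ne'

theorem negPart_nonempty (hl : AffDepOn Z l) : (negPart Z l).Nonempty :=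
  nonempty_of_sum_ne_zero <| by rw [hl.sum_negPart]; exact neg_ne_zero.2 hl.sum_posPart_pos.ne'

theorem radonPoint_eq_centerMass_negPart (hl : AffDepOn Z l) :
    radonPoint Z l = (negPart Z l).centerMass l id := by
  rw [radonPoint_eq_centerMass_posPart, centerMass, centerMass]
  simp only [id, hl.sum_negPart, hl.sum_smul_negPart, inv_neg, neg_smul_neg]

theorem radonPoint_mem_convexHull_posPart (hl : AffDepOn Z l) :
    radonPoint Z l ∈ convexHull ℝ (posPart Z l : Set (Fin d → ℝ)) := by
  rw [radonPoint_eq_centerMass_posPart]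
  exact centerMass_id_mem_convexHull _ (fun x hx => (mem_filter.1 hx).2.le) hl.sum_posPart_pos

theorem radonPoint_mem_convexHull_negPart (hl : AffDepOn Z l) :
    radonPoint Z l ∈ convexHull ℝ (negPart Z l : Set (Fin d → ℝ)) := by
  rw [hl.radonPoint_eq_centerMass_negPart]
  refine centerMass_id_mem_convexHull_of_nonpos _ (fun x hx => (mem_filter.1 hx).2.le) ?_
  rw [hl.sum_negPart]
  exact neg_neg_of_pos hl.sum_posPart_pos

end AffDepOn

end Circuits

theorem realized_positive_side_excludes_negative_side_general
    (d : ℕ) (V : Finset (Fin d → ℝ)) (Δ : Finset (Finset (Fin d → ℝ)))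
    (hsimp : ∀ S ∈ Δ, S ⊆ V ∧ S.card = d + 1 ∧ ¬ AffDep S)
    (hface : ∀ S ∈ Δ, ∀ T ∈ Δ,
      convexHull ℝ (↑S : Set (Fin d → ℝ)) ∩ convexHull ℝ (↑T : Set (Fin d → ℝ)) =
        convexHull ℝ (↑(S ∩ T) : Set (Fin d → ℝ)))
    (Z : Finset (Fin d → ℝ))
    (l : (Fin d → ℝ) → ℝ) (hl : AffDepOn Z l)
    (hrealized : ∀ p ∈ posPart Z l, ∃ S ∈ Δ, Z.erase p ⊆ S) :
    ∃ q ∈ negPart Z l, ∀ T ∈ Δ, ¬ Z.erase q ⊆ T := by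
  by_contra! hneg
  obtain ⟨p, hp⟩ := hl.posPart_nonempty
  obtain ⟨q, hq⟩ := hl.negPart_nonempty
  obtain ⟨S, hSΔ, hpS⟩ := hrealized p hp
  obtain ⟨T, hTΔ, hqT⟩ := hneg q hq
  have hdisj := disjoint_convexHull_of_subset_of_convexHull_inter
    (affineIndependent_of_not_affDep (hsimp S hSΔ).2.2)
    (affineIndependent_of_not_affDep (hsimp T hTΔ).2.2) (hface S hSΔ T hTΔ)
    ((negPart_subset_erase hp).trans hpS) ((posPart_subset_erase hq).trans hqT)
    (disjoint_posPart_negPart Z l).symm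
  exact Set.disjoint_left.1 hdisj hl.radonPoint_mem_convexHull_negPart
    hl.radonPoint_mem_convexHull_posPart

theorem realized_positive_side_excludes_negative_side
    (d : ℕ) (V : Finset (Fin d → ℝ)) (Δ : Finset (Finset (Fin d → ℝ)))
    (hsimp : ∀ S ∈ Δ, S ⊆ V ∧ S.card = d + 1 ∧ ¬ AffDep S)
    (hface : ∀ S ∈ Δ, ∀ T ∈ Δ,
      convexHull ℝ (↑S : Set (Fin d → ℝ)) ∩ convexHull ℝ (↑T : Set (Fin d → ℝ)) =
        convexHull ℝ (↑(S ∩ T) : Set (Fin d → ℝ)))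
    (hcover : (⋃ S ∈ Δ, convexHull ℝ (↑S : Set (Fin d → ℝ))) =
        convexHull ℝ (↑V : Set (Fin d → ℝ)))
    (Z : Finset (Fin d → ℝ)) (hZV : Z ⊆ V) (hZ : IsCircuit Z)
    (l : (Fin d → ℝ) → ℝ) (hl : AffDepOn Z l) (hne : ∀ p ∈ Z, l p ≠ 0)
    (hrealized : ∀ p ∈ posPart Z l, ∃ S ∈ Δ, Z.erase p ⊆ S) :
    ∃ q ∈ negPart Z l, ∀ T ∈ Δ, ¬ Z.erase q ⊆ T :=
  realized_positive_side_excludes_negative_side_general d V Δ hsimp hface Z l hl hrealized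
end

section
/- Let Δ be a geometric triangulation of a polytope P = conv(V) in ℝ^d, and let Z ⊆ V be a flippable circuit with Δ⁺(Z) ⊆ Δ (the full-dimensional case, |Z| = d+2). Then the triangulation Δ' = (Δ \ Δ⁺(Z)) ∪ Δ⁻(Z) obtained by the bistellar flip is again a geometric triangulation of P: the union of its simplices is P. -/
open Finset

open scoped Classical

variable {d : ℕ}

/-!
If `x = ∑ w_y y` is a convex combination of the points of `Z` and `λ` is an affine dependence
on `Z`, then `w - t λ` with `t = min_{p ∈ Z⁺} w_p / λ_p` is again a convex combination
representing `x`, and it vanishes at a minimizer `p`; so `x ∈ conv (Z \ {p})`. Hence the simplices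
of `Δ⁺(Z)` cover `conv Z`, and applying this to `-λ` so do those of `Δ⁻(Z)`. Exchanging one
family for the other therefore does not change the union of the simplices of `Δ`.
-/

section ConvexCombination

variable {𝕜 E : Type*} [Field 𝕜] [LinearOrder 𝕜] [IsStrictOrderedRing 𝕜]
  [AddCommGroup E] [Module 𝕜 E] [DecidableEq E]

theorem Finset.sum_smul_mem_convexHull_erase {Z : Finset E} {w : E → 𝕜} {p : E}
    (hw₀ : ∀ y ∈ Z, 0 ≤ w y) (hw₁ : ∑ y ∈ Z, w y = 1) (hp : w p = 0) :
    ∑ y ∈ Z, w y • y ∈ convexHull 𝕜 (↑(Z.erase p) : Set E) := by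
  have hpz : w p • p = 0 := by rw [hp, zero_smul]
  rw [← sum_erase Z (f := fun y => w y • y) hpz]
  exact (convex_convexHull 𝕜 _).sum_mem (fun y hy => hw₀ y (mem_of_mem_erase hy))
    (by rwa [sum_erase Z hp]) (fun y hy => subset_convexHull 𝕜 _ hy)

theorem Finset.exists_pos_mem_convexHull_erase_of_affine_dependence {Z : Finset E} {l : E → 𝕜}
    {x : E} (hsmul : ∑ p ∈ Z, l p • p = 0) (hsum : ∑ p ∈ Z, l p = 0) (hpos : ∃ p ∈ Z, 0 < l p)
    (hx : x ∈ convexHull 𝕜 (↑Z : Set E)) :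
    ∃ p ∈ Z, 0 < l p ∧ x ∈ convexHull 𝕜 (↑(Z.erase p) : Set E) := by
  obtain ⟨w, hw₀, hw₁, rfl⟩ := mem_convexHull'.1 hx
  have hne : (Z.filter (0 < l ·)).Nonempty := by simpa [Finset.Nonempty] using hpos
  obtain ⟨p, hp, hmin⟩ := (Z.filter (0 < l ·)).exists_min_image (fun p => w p / l p) hne
  obtain ⟨hpZ, hlp⟩ := mem_filter.1 hp
  set t := w p / l p with ht
  have ht₀ : 0 ≤ t := div_nonneg (hw₀ p hpZ) hlp.le
  have hshift : ∑ y ∈ Z, w y • y = ∑ y ∈ Z, (w y - t * l y) • y := by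
    simp only [sub_smul, mul_smul, sum_sub_distrib, ← smul_sum, hsmul, smul_zero, sub_zero]
  refine ⟨p, hpZ, hlp, hshift ▸ sum_smul_mem_convexHull_erase ?_ ?_ ?_⟩
  · intro y hy
    rcases le_or_gt (l y) 0 with hly | hly
    · linarith [hw₀ y hy, mul_nonpos_of_nonneg_of_nonpos ht₀ hly]
    · exact sub_nonneg.2 ((le_div_iff₀ hly).1 (hmin y (mem_filter.2 ⟨hy, hly⟩)))
  · rw [sum_sub_distrib, ← mul_sum, hsum, hw₁, mul_zero, sub_zero]
  · rw [ht, div_mul_cancel₀ _ hlp.ne', sub_self]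

end ConvexCombination

variable {Z : Finset (Fin d → ℝ)} {l : (Fin d → ℝ) → ℝ}

theorem negPart_eq_posPart_neg : negPart Z l = posPart Z (-l) := by
  ext p
  simp [_root_.negPart, _root_.posPart]

namespace AffDepOn

theorem neg (hl : AffDepOn Z l) : AffDepOn Z (-l) := by
  obtain ⟨hsmul, hsum, p, hp, hlp⟩ := hl
  refine ⟨?_, ?_, p, hp, by simpa using hlp⟩ <;> simp [neg_smul, sum_neg_distrib, hsmul, hsum]

theorem exists_pos (hl : AffDepOn Z l) : ∃ p ∈ Z, 0 < l p := by
  obtain ⟨-, hsum, p, hp, hlp⟩ := hl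
  by_contra! hnonpos
  exact hlp ((sum_eq_zero_iff_of_nonpos hnonpos).1 hsum p hp)

theorem iUnion_convexHull_erase_posPart (hl : AffDepOn Z l) :
    (⋃ S ∈ (posPart Z l).image (fun p => Z.erase p), convexHull ℝ (↑S : Set (Fin d → ℝ))) =
      convexHull ℝ (↑Z : Set (Fin d → ℝ)) := by
  rw [set_biUnion_finset_image]
  refine subset_antisymm
    (Set.iUnion₂_subset fun p _ => convexHull_mono (coe_subset.2 (erase_subset p Z))) ?_
  intro x hx
  obtain ⟨p, hpZ, hlp, hpx⟩ :=
    exists_pos_mem_convexHull_erase_of_affine_dependence hl.1 hl.2.1 hl.exists_pos hx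
  exact Set.mem_iUnion₂.2 ⟨p, mem_filter.2 ⟨hpZ, hlp⟩, hpx⟩

theorem iUnion_convexHull_erase_negPart (hl : AffDepOn Z l) :
    (⋃ S ∈ (negPart Z l).image (fun q => Z.erase q), convexHull ℝ (↑S : Set (Fin d → ℝ))) =
      convexHull ℝ (↑Z : Set (Fin d → ℝ)) := by
  rw [negPart_eq_posPart_neg]
  exact hl.neg.iUnion_convexHull_erase_posPart

end AffDepOn

theorem bistellar_flip_preserves_covering_general
    (d : ℕ) (V : Finset (Fin d → ℝ)) (Δ : Finset (Finset (Fin d → ℝ)))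
    (hcover : (⋃ S ∈ Δ, convexHull ℝ (↑S : Set (Fin d → ℝ))) =
        convexHull ℝ (↑V : Set (Fin d → ℝ)))
    (Z : Finset (Fin d → ℝ))
    (l : (Fin d → ℝ) → ℝ) (hl : AffDepOn Z l)
    (hrealized : (posPart Z l).image (fun p => Z.erase p) ⊆ Δ) :
    (⋃ S ∈ (Δ \ (posPart Z l).image (fun p => Z.erase p)) ∪
        (negPart Z l).image (fun q => Z.erase q),
      convexHull ℝ (↑S : Set (Fin d → ℝ))) =
      convexHull ℝ (↑V : Set (Fin d → ℝ)) := by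
  rw [set_biUnion_union, hl.iUnion_convexHull_erase_negPart,
    ← hl.iUnion_convexHull_erase_posPart, ← set_biUnion_union,
    sdiff_union_of_subset hrealized, hcover]

theorem bistellar_flip_preserves_covering
    (d : ℕ) (V : Finset (Fin d → ℝ)) (Δ : Finset (Finset (Fin d → ℝ)))
    (hsimp : ∀ S ∈ Δ, S ⊆ V ∧ S.card = d + 1 ∧ ¬ AffDep S)
    (hface : ∀ S ∈ Δ, ∀ T ∈ Δ,
      convexHull ℝ (↑S : Set (Fin d → ℝ)) ∩ convexHull ℝ (↑T : Set (Fin d → ℝ)) =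
        convexHull ℝ (↑(S ∩ T) : Set (Fin d → ℝ)))
    (hcover : (⋃ S ∈ Δ, convexHull ℝ (↑S : Set (Fin d → ℝ))) =
        convexHull ℝ (↑V : Set (Fin d → ℝ)))
    (Z : Finset (Fin d → ℝ)) (hZV : Z ⊆ V) (hZ : IsCircuit Z)
    (hspan : affineSpan ℝ (↑Z : Set (Fin d → ℝ)) = ⊤)
    (l : (Fin d → ℝ) → ℝ) (hl : AffDepOn Z l) (hne : ∀ p ∈ Z, l p ≠ 0)
    (hrealized : (posPart Z l).image (fun p => Z.erase p) ⊆ Δ) :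
    (⋃ S ∈ (Δ \ (posPart Z l).image (fun p => Z.erase p)) ∪
        (negPart Z l).image (fun q => Z.erase q),
      convexHull ℝ (↑S : Set (Fin d → ℝ))) =
      convexHull ℝ (↑V : Set (Fin d → ℝ)) :=
  bistellar_flip_preserves_covering_general d V Δ hcover Z l hl hrealized
end
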